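/- arXiv:1612.04228 — 2 statements merged into one kernel-verified Lean document; each statement's English description precedes it below -/
import Mathlib

section
/- For positive reals d1, d2 and nonnegative reals s, s', exp(-s/d1) + exp(-s'/d2) ≥ exp(-(s+s')/(d1+d2)) + exp(-s/d1 - s'/d2). -/
/-- The key inequality showing the exponential distance distribution
`F_e(s;d) = 1 - exp(-s/d)` satisfies the Menger triangle inequality under the
product triangle function. -/
theorem exp_triangle_ineq (d1 d2 s s' : ℝ) (hd1 : 0 < d1) (hd2 : 0 < d2)
    (hs : 0 ≤ s) (hs' : 0 ≤ s') :
    Real.exp (-(s + s') / (d1 + d2)) + Real.exp (-s / d1 - s' / d2) ≤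
      Real.exp (-s / d1) + Real.exp (-s' / d2) := by
  set a := s / d1 with ha
  set b := s' / d2 with hb
  have ha0 : 0 ≤ a := div_nonneg hs hd1.le
  have hb0 : 0 ≤ b := div_nonneg hs' hd2.le
  have hda : d1 * a = s := by rw [ha]; field_simp [hd1.ne']
  have hdb : d2 * b = s' := by rw [hb]; field_simp [hd2.ne']
  have hd12 : 0 < d1 + d2 := by linarith
  rw [show -s/d1 = -a by rw [neg_div], show -s'/d2 = -b by rw [neg_div]]
  rcases le_total a b with hab | hab
  · have hc : a ≤ (s + s') / (d1 + d2) := by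
      rw [le_div_iff₀ hd12]; nlinarith
    have h1 : Real.exp (-(s + s') / (d1 + d2)) ≤ Real.exp (-a) := by
      apply Real.exp_le_exp.2; rw [neg_div]; linarith
    have h2 : Real.exp (-a - b) ≤ Real.exp (-b) := by
      apply Real.exp_le_exp.2; linarith
    linarith
  · have hc : b ≤ (s + s') / (d1 + d2) := by
      rw [le_div_iff₀ hd12]; nlinarith
    have h1 : Real.exp (-(s + s') / (d1 + d2)) ≤ Real.exp (-b) := by
      apply Real.exp_le_exp.2; rw [neg_div]; linarith
    have h2 : Real.exp (-a - b) ≤ Real.exp (-a) := by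
      apply Real.exp_le_exp.2; linarith
    linarith
end

section
/- Let N(t) be a Poisson process of rate 1/λ built from i.i.d. exponential interarrival times X_i with mean λ. Then for disjoint intervals, the increment N(t) - N(s) (with 0 ≤ s < t) is Poisson distributed with parameter (t-s)/λ: P(N(t)-N(s) = k) = ((t-s)/λ)^k / k! · exp(-(t-s)/λ). -/
set_option linter.unusedSectionVars false
set_option maxHeartbeats 1000000

open MeasureTheory ProbabilityTheory Real Set
open scoped ENNReal

namespace PoissonAux

section


variable {Ω : Type*} [MeasurableSpace Ω] {P : Measure Ω} [IsProbabilityMeasure P]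

lemma peel {α : Type*} [MeasurableSpace α] (W : Ω → α) (Z : Ω → ℝ)
    (hW : Measurable W) (hZ : Measurable Z) (hInd : IndepFun W Z P)
    (f : α → ℝ → ℝ≥0∞) (hf : Measurable (Function.uncurry f)) :
    ∫⁻ ω, f (W ω) (Z ω) ∂P = ∫⁻ ω, ∫⁻ z, f (W ω) z ∂(Measure.map Z P) ∂P := by
  have hmap : Measure.map (fun ω => (W ω, Z ω)) P = (Measure.map W P).prod (Measure.map Z P) :=
    (indepFun_iff_map_prod_eq_prod_map_map hW.aemeasurable hZ.aemeasurable).mp hInd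
  haveI : IsProbabilityMeasure (Measure.map Z P) := Measure.isProbabilityMeasure_map hZ.aemeasurable
  calc ∫⁻ ω, f (W ω) (Z ω) ∂P
      = ∫⁻ p : α × ℝ, Function.uncurry f p ∂(Measure.map (fun ω => (W ω, Z ω)) P) :=
        (lintegral_map hf (hW.prodMk hZ)).symm
    _ = ∫⁻ w, ∫⁻ z, f w z ∂(Measure.map Z P) ∂(Measure.map W P) := by
        rw [hmap]; exact lintegral_prod _ hf.aemeasurable
    _ = ∫⁻ ω, ∫⁻ z, f (W ω) z ∂(Measure.map Z P) ∂P :=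
        lintegral_map (Measurable.lintegral_prod_right hf) hW

lemma indep_comp (X : ℕ → Ω → ℝ) (hmeas : ∀ i, Measurable (X i))
    (hindep : iIndepFun X P)
    {α β : Type*} [MeasurableSpace α] [MeasurableSpace β] (I J : Finset ℕ) (hIJ : Disjoint I J)
    (g : (I → ℝ) → α) (h : (J → ℝ) → β) (hg : Measurable g) (hh : Measurable h) :
    IndepFun (fun ω => g fun i => X i ω) (fun ω => h fun j => X j ω) P :=
  (hindep.indepFun_finset I J hIJ hmeas).comp hg hh


end

section


lemma expMeasure_eq (r : ℝ) : expMeasure r = volume.withDensity (exponentialPDF r) := rfl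

lemma expMeasure_Iio_zero (r : ℝ) : expMeasure r (Iio 0) = 0 := by
  rw [expMeasure_eq, withDensity_apply _ measurableSet_Iio]
  exact lintegral_exponentialPDF_of_nonpos le_rfl

lemma expMeasure_ae_nonneg {r : ℝ} : ∀ᵐ x ∂(expMeasure r), 0 ≤ x := by
  rw [ae_iff]
  have : {x : ℝ | ¬ 0 ≤ x} = Iio 0 := by ext x; simp only [mem_setOf_eq, mem_Iio, not_le]
  rw [this, expMeasure_eq, withDensity_apply _ measurableSet_Iio]
  exact lintegral_exponentialPDF_of_nonpos le_rfl

lemma expMeasure_Iic {r : ℝ} (hr : 0 < r) (c : ℝ) (hc : 0 ≤ c) :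
    expMeasure r (Iic c) = ENNReal.ofReal (1 - exp (-(r * c))) := by
  haveI : IsProbabilityMeasure (expMeasure r) := isProbabilityMeasure_expMeasure hr
  rw [← ProbabilityTheory.ofReal_cdf (expMeasure r) c]
  have := cdf_expMeasure_eq hr c
  rw [this, if_pos hc]

lemma expMeasure_Ioi {r : ℝ} (hr : 0 < r) (c : ℝ) (hc : 0 ≤ c) :
    expMeasure r (Ioi c) = ENNReal.ofReal (exp (-(r * c))) := by
  haveI : IsProbabilityMeasure (expMeasure r) := isProbabilityMeasure_expMeasure hr
  have h1 : (Iic c)ᶜ = Ioi c := Set.compl_Iic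
  have h2 : expMeasure r (Ioi c) = 1 - expMeasure r (Iic c) := by
    rw [← h1, prob_compl_eq_one_sub measurableSet_Iic]
  rw [h2, expMeasure_Iic hr c hc]
  have he : (0:ℝ) ≤ 1 - exp (-(r * c)) := by
    have h3 : exp (-(r * c)) ≤ 1 := exp_le_one_iff.mpr (by nlinarith [mul_nonneg hr.le hc])
    linarith
  rw [← ENNReal.ofReal_one, ← ENNReal.ofReal_sub _ he]
  ring_nf

lemma expMeasure_Iic_lt_one {r : ℝ} (hr : 0 < r) (c : ℝ) :
    expMeasure r (Iic c) < 1 := by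
  rcases le_or_gt 0 c with hc | hc
  · rw [expMeasure_Iic hr c hc]
    have : (1:ℝ) - exp (-(r * c)) < 1 := by
      have := exp_pos (-(r * c)); linarith
    calc ENNReal.ofReal (1 - exp (-(r*c))) < ENNReal.ofReal 1 := by
          have h4 : exp (-(r * c)) ≤ 1 := exp_le_one_iff.mpr (by nlinarith [mul_nonneg hr.le hc])
          exact (ENNReal.ofReal_lt_ofReal_iff_of_nonneg (by linarith)).mpr this
      _ = 1 := ENNReal.ofReal_one
  · have : Iic c ⊆ Iio 0 := fun x hx => lt_of_le_of_lt hx hc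
    calc expMeasure r (Iic c) ≤ expMeasure r (Iio 0) := measure_mono this
      _ = 0 := by
          rw [expMeasure_eq, withDensity_apply _ measurableSet_Iio]
          exact lintegral_exponentialPDF_of_nonpos le_rfl
      _ < 1 := by norm_num


end

section




lemma key_integral₁ {r : ℝ} (hr : 0 < r) (m : ℕ) (d : ℝ) :
    ∫⁻ x, (if x ≤ d then ENNReal.ofReal (exp (-(r * (d - x))) * (r * (d - x)) ^ m / m.factorial) else 0)
        ∂(expMeasure r)
    = if 0 ≤ d then ENNReal.ofReal (exp (-(r * d)) * (r * d) ^ (m+1) / (m+1).factorial) else 0 := by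
  have hcont : Continuous fun x : ℝ => exp (-(r * (d - x))) * (r * (d - x)) ^ m / m.factorial := by
    fun_prop
  have hFmeas : Measurable fun x : ℝ =>
      (if x ≤ d then ENNReal.ofReal (exp (-(r * (d - x))) * (r * (d - x)) ^ m / m.factorial) else 0) := by
    exact Measurable.ite measurableSet_Iic (hcont.measurable.ennreal_ofReal) measurable_const
  set h : ℝ → ℝ := fun x => (r * exp (-(r * d))) * ((r * (d - x)) ^ m / m.factorial) with hh
  have hpt : ∀ x : ℝ, (exponentialPDF r x) *
      (if x ≤ d then ENNReal.ofReal (exp (-(r * (d - x))) * (r * (d - x)) ^ m / m.factorial) else 0)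
      = ENNReal.ofReal ((Icc (0:ℝ) d).indicator h x) := by
    intro x
    rw [exponentialPDF_eq]
    by_cases hx0 : 0 ≤ x
    · by_cases hxd : x ≤ d
      · rw [if_pos hx0, if_pos hxd, indicator_of_mem (mem_Icc.mpr ⟨hx0, hxd⟩),
          ← ENNReal.ofReal_mul (by positivity)]
        congr 1
        have hxp : exp (-(r * x)) * exp (-(r * (d - x))) = exp (-(r * d)) := by
          rw [← Real.exp_add]; ring_nf
        calc r * exp (-(r * x)) * (exp (-(r * (d - x))) * (r * (d - x)) ^ m / m.factorial)
            = (exp (-(r * x)) * exp (-(r * (d - x)))) * (r * ((r * (d - x)) ^ m / m.factorial)) := by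
              ring
          _ = h x := by rw [hxp, hh]; ring
      · rw [if_neg hxd, indicator_of_notMem (by simp [mem_Icc, hxd]), mul_zero]
        simp
    · rw [if_neg hx0, indicator_of_notMem (by simp [mem_Icc, hx0])]
      simp
  have hpdf : Measurable (exponentialPDF r) := (measurable_exponentialPDFReal r).ennreal_ofReal
  rw [expMeasure_eq, lintegral_withDensity_eq_lintegral_mul _ hpdf hFmeas]
  simp only [Pi.mul_apply]
  rw [funext hpt] at *
  by_cases hd : 0 ≤ d
  · rw [if_pos hd]
    have hint : Integrable ((Icc (0:ℝ) d).indicator h) := by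
      refine (IntegrableOn.integrable_indicator ?_ measurableSet_Icc)
      exact (by fun_prop : Continuous h).integrableOn_Icc
    have hnn : 0 ≤ᵐ[volume] (Icc (0:ℝ) d).indicator h := by
      refine Filter.Eventually.of_forall fun x => indicator_nonneg (fun y hy => ?_) x
      have := (mem_Icc.mp hy).2
      have h1 : 0 ≤ d - y := by linarith
      positivity
    rw [lintegral_congr (fun x => rfl), ← ofReal_integral_eq_lintegral_ofReal hint hnn]
    congr 1
    rw [integral_indicator measurableSet_Icc, integral_Icc_eq_integral_Ioc,
      ← intervalIntegral.integral_of_le hd]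
    have : ∀ x : ℝ, h x = (r * exp (-(r * d)) * r ^ m / m.factorial) * (d - x) ^ m := by
      intro x; rw [hh]; simp only [mul_pow]; ring
    rw [funext this, intervalIntegral.integral_const_mul,
      intervalIntegral.integral_comp_sub_left (fun x => x ^ m) d, sub_zero, sub_self,
      integral_pow]
    have hfac : ((m+1).factorial : ℝ) = (m+1) * m.factorial := by
      rw [Nat.factorial_succ]; push_cast; ring
    rw [hfac]
    have hm : (m.factorial : ℝ) ≠ 0 := Nat.cast_ne_zero.mpr (Nat.factorial_pos m).ne'
    field_simp
    ring
  · rw [if_neg hd]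
    have : ∀ x : ℝ, ENNReal.ofReal ((Icc (0:ℝ) d).indicator h x) = 0 := by
      intro x
      rw [indicator_of_notMem (by rw [Icc_eq_empty (by linarith [not_le.mp hd] : ¬ (0:ℝ) ≤ d)]; exact notMem_empty x)]
      simp
    rw [funext this]
    simp


end

section


lemma key_integral₂ {r : ℝ} (hr : 0 < r) (m : ℕ) {a s t : ℝ} (has : a ≤ s) (hst : s < t) :
    ∫⁻ x, (if s - a < x ∧ x ≤ t - a then
        ENNReal.ofReal (exp (-(r * (t - a - x))) * (r * (t - a - x)) ^ m / m.factorial) else 0)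
        ∂(expMeasure r)
    = ENNReal.ofReal (exp (-(r * (t - a))) * (r * (t - s)) ^ (m+1) / (m+1).factorial) := by
  have hcont : Continuous fun x : ℝ => exp (-(r * (t - a - x))) * (r * (t - a - x)) ^ m / m.factorial := by
    fun_prop
  have hsetm : MeasurableSet {x : ℝ | s - a < x ∧ x ≤ t - a} := by
    have : {x : ℝ | s - a < x ∧ x ≤ t - a} = Ioc (s-a) (t-a) := rfl
    rw [this]; exact measurableSet_Ioc
  have hFmeas : Measurable fun x : ℝ => (if s - a < x ∧ x ≤ t - a then
      ENNReal.ofReal (exp (-(r * (t - a - x))) * (r * (t - a - x)) ^ m / m.factorial) else 0) :=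
    Measurable.ite hsetm (hcont.measurable.ennreal_ofReal) measurable_const
  set h : ℝ → ℝ := fun x => (r * exp (-(r * (t - a)))) * ((r * (t - a - x)) ^ m / m.factorial) with hh
  have hsa : (0:ℝ) ≤ s - a := by linarith
  have hpt : ∀ x : ℝ, (exponentialPDF r x) *
      (if s - a < x ∧ x ≤ t - a then
        ENNReal.ofReal (exp (-(r * (t - a - x))) * (r * (t - a - x)) ^ m / m.factorial) else 0)
      = ENNReal.ofReal ((Ioc (s-a) (t-a)).indicator h x) := by
    intro x
    rw [exponentialPDF_eq]
    by_cases hx : s - a < x ∧ x ≤ t - a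
    · have hx0 : 0 ≤ x := le_of_lt (lt_of_le_of_lt hsa hx.1)
      rw [if_pos hx, if_pos hx0, indicator_of_mem (mem_Ioc.mpr hx),
        ← ENNReal.ofReal_mul (by positivity)]
      congr 1
      have hxp : exp (-(r * x)) * exp (-(r * (t - a - x))) = exp (-(r * (t - a))) := by
        rw [← Real.exp_add]; ring_nf
      calc r * exp (-(r * x)) * (exp (-(r * (t - a - x))) * (r * (t - a - x)) ^ m / m.factorial)
          = (exp (-(r * x)) * exp (-(r * (t - a - x)))) * (r * ((r * (t - a - x)) ^ m / m.factorial)) := by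
            ring
        _ = h x := by rw [hxp, hh]; ring
    · rw [if_neg hx, indicator_of_notMem (by simpa [mem_Ioc] using hx), mul_zero]
      simp
  have hpdf : Measurable (exponentialPDF r) := (measurable_exponentialPDFReal r).ennreal_ofReal
  rw [expMeasure_eq, lintegral_withDensity_eq_lintegral_mul _ hpdf hFmeas]
  simp only [Pi.mul_apply]
  rw [funext hpt] at *
  have hint : Integrable ((Ioc (s-a) (t-a)).indicator h) := by
    refine (IntegrableOn.integrable_indicator ?_ measurableSet_Ioc)
    exact ((by fun_prop : Continuous h).integrableOn_Icc).mono_set Ioc_subset_Icc_self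
  have hnn : 0 ≤ᵐ[volume] (Ioc (s-a) (t-a)).indicator h := by
    refine Filter.Eventually.of_forall fun x => indicator_nonneg (fun y hy => ?_) x
    have := (mem_Ioc.mp hy).2
    have h1 : 0 ≤ t - a - y := by linarith
    positivity
  rw [lintegral_congr (fun x => rfl), ← ofReal_integral_eq_lintegral_ofReal hint hnn]
  congr 1
  have hle : s - a ≤ t - a := by linarith
  rw [integral_indicator measurableSet_Ioc, ← intervalIntegral.integral_of_le hle]
  have hx2 : ∀ x : ℝ, h x = (r * exp (-(r * (t - a))) * r ^ m / m.factorial) * (t - a - x) ^ m := by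
    intro x; rw [hh]; simp only [mul_pow]; ring
  rw [funext hx2, intervalIntegral.integral_const_mul,
    intervalIntegral.integral_comp_sub_left (fun x => x ^ m) (t - a), sub_self]
  have he1 : t - a - (s - a) = t - s := by ring
  rw [he1, integral_pow]
  have hfac : ((m+1).factorial : ℝ) = (m+1) * m.factorial := by
    rw [Nat.factorial_succ]; push_cast; ring
  rw [hfac]
  have hm : (m.factorial : ℝ) ≠ 0 := Nat.cast_ne_zero.mpr (Nat.factorial_pos m).ne'
  simp only [mul_pow]
  field_simp
  ring


end

section


variable {Ω : Type*} [MeasurableSpace Ω] {P : Measure Ω} [IsProbabilityMeasure P]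

lemma peel' {α : Type*} [MeasurableSpace α] (W : Ω → α) (Z : Ω → ℝ)
    (hW : Measurable W) (hZ : Measurable Z) (hInd : IndepFun W Z P)
    (f : α → ℝ → ℝ≥0∞) (hf : Measurable (Function.uncurry f)) :
    ∫⁻ ω, f (W ω) (Z ω) ∂P = ∫⁻ ω, ∫⁻ z, f (W ω) z ∂(Measure.map Z P) ∂P := by
  have hmap : Measure.map (fun ω => (W ω, Z ω)) P = (Measure.map W P).prod (Measure.map Z P) :=
    (indepFun_iff_map_prod_eq_prod_map_map hW.aemeasurable hZ.aemeasurable).mp hInd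
  haveI : IsProbabilityMeasure (Measure.map Z P) := Measure.isProbabilityMeasure_map hZ.aemeasurable
  calc ∫⁻ ω, f (W ω) (Z ω) ∂P
      = ∫⁻ p : α × ℝ, Function.uncurry f p ∂(Measure.map (fun ω => (W ω, Z ω)) P) :=
        (lintegral_map hf (hW.prodMk hZ)).symm
    _ = ∫⁻ w, ∫⁻ z, f w z ∂(Measure.map Z P) ∂(Measure.map W P) := by
        rw [hmap]; exact lintegral_prod _ hf.aemeasurable
    _ = ∫⁻ ω, ∫⁻ z, f (W ω) z ∂(Measure.map Z P) ∂P :=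
        lintegral_map (Measurable.lintegral_prod_right hf) hW



variable {r : ℝ} (X : ℕ → Ω → ℝ)

lemma sum_measurable (hmeas : ∀ i, Measurable (X i)) (I : Finset ℕ) :
    Measurable (fun ω => ∑ i ∈ I, X i ω) := by
  exact Finset.measurable_sum I fun i _ => hmeas i

lemma indep_single_sum (hmeas : ∀ i, Measurable (X i))
    (hindep : iIndepFun X P) {n : ℕ} {I : Finset ℕ} (hn : n ∉ I) :
    IndepFun (X n) (fun ω => ∑ i ∈ I, X i ω) P := by
  have := indep_comp X hmeas hindep {n} I (Finset.disjoint_singleton_left.mpr hn)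
    (fun v => v ⟨n, Finset.mem_singleton_self n⟩)
    (fun v => ∑ j : I, v j)
    (measurable_pi_apply _)
    (Finset.measurable_sum Finset.univ fun j _ => measurable_pi_apply j)
  convert this using 2 with ω
  rw [← Finset.sum_coe_sort I (fun i => X i ω)]

lemma L1 (hr : 0 < r) (hmeas : ∀ i, Measurable (X i))
    (hdist : ∀ i, Measure.map (X i) P = expMeasure r)
    (hindep : iIndepFun X P) (I : Finset ℕ) :
    ∀ c : ℝ, ∫⁻ z, (if z ≤ c then ENNReal.ofReal (exp (-(r * (c - z)))) else 0)
        ∂(Measure.map (fun ω => ∑ i ∈ I, X i ω) P)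
    = if 0 ≤ c then
        ENNReal.ofReal (exp (-(r * c)) * (r * c) ^ I.card / I.card.factorial) else 0 := by
  induction I using Finset.induction_on with
  | empty =>
    intro c
    have h0 : (fun ω : Ω => ∑ i ∈ (∅ : Finset ℕ), X i ω) = fun _ => (0:ℝ) := by
      funext ω; simp
    rw [h0, Measure.map_const, measure_univ, one_smul, lintegral_dirac]
    simp only [Finset.card_empty, pow_zero, Nat.factorial_zero, Nat.cast_one, mul_one, div_one,
      sub_zero]
  | @insert n I hn ih =>
    intro c
    have hFmeas : Measurable fun z : ℝ => (if z ≤ c then ENNReal.ofReal (exp (-(r * (c - z)))) else 0) :=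
      Measurable.ite measurableSet_Iic ((by fun_prop : Continuous fun z : ℝ => exp (-(r * (c - z)))).measurable.ennreal_ofReal) measurable_const
    have hsum : Measurable (fun ω => ∑ i ∈ insert n I, X i ω) := sum_measurable X hmeas _
    have hS : Measurable (fun ω => ∑ i ∈ I, X i ω) := sum_measurable X hmeas I
    rw [lintegral_map hFmeas hsum]
    have hsplit : ∀ ω, ∑ i ∈ insert n I, X i ω = X n ω + ∑ i ∈ I, X i ω := by
      intro ω; rw [Finset.sum_insert hn]
    simp only [hsplit]
    set f : ℝ → ℝ → ℝ≥0∞ := fun w z => if w + z ≤ c then ENNReal.ofReal (exp (-(r * (c - (w + z))))) else 0 with hf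
    have hfm : Measurable (Function.uncurry f) := by
      rw [hf]
      apply Measurable.ite
      · exact measurableSet_le (by fun_prop) measurable_const
      · exact ((by fun_prop : Continuous fun p : ℝ × ℝ => exp (-(r * (c - (p.1 + p.2))))).measurable).ennreal_ofReal
      · exact measurable_const
    have hpeel := peel' (X n) (fun ω => ∑ i ∈ I, X i ω) (hmeas n) hS
      (indep_single_sum X hmeas hindep hn) f hfm
    rw [hf] at hpeel
    rw [hpeel]
    have hinner : ∀ ω, ∫⁻ z, (if X n ω + z ≤ c then ENNReal.ofReal (exp (-(r * (c - (X n ω + z))))) else 0)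
        ∂(Measure.map (fun ω => ∑ i ∈ I, X i ω) P)
        = if 0 ≤ c - X n ω then
            ENNReal.ofReal (exp (-(r * (c - X n ω))) * (r * (c - X n ω)) ^ I.card / I.card.factorial) else 0 := by
      intro ω
      rw [← ih (c - X n ω)]
      apply lintegral_congr
      intro z
      have hiff : X n ω + z ≤ c ↔ z ≤ c - X n ω := by constructor <;> intro <;> linarith
      have hval : c - (X n ω + z) = c - X n ω - z := by ring
      rw [hval]
      exact if_congr hiff rfl rfl
    simp only [hinner]
    set G : ℝ → ℝ≥0∞ := fun x => if 0 ≤ c - x then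
        ENNReal.ofReal (exp (-(r * (c - x))) * (r * (c - x)) ^ I.card / I.card.factorial) else 0 with hG
    have hGm : Measurable G := by
      rw [hG]
      apply Measurable.ite
      · exact measurableSet_le measurable_const (by fun_prop)
      · exact ((by fun_prop : Continuous fun x : ℝ => exp (-(r * (c - x))) * (r * (c - x)) ^ I.card / I.card.factorial).measurable).ennreal_ofReal
      · exact measurable_const
    have : ∫⁻ ω, G (X n ω) ∂P = ∫⁻ x, G x ∂(expMeasure r) := by
      rw [← hdist n, lintegral_map hGm (hmeas n)]
    rw [this]
    have hGx : ∀ x, G x = if x ≤ c then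
        ENNReal.ofReal (exp (-(r * (c - x))) * (r * (c - x)) ^ I.card / I.card.factorial) else 0 := by
      intro x
      rw [hG]
      exact if_congr (by simp [sub_nonneg]) rfl rfl
    rw [funext hGx, key_integral₁ hr I.card c, Finset.card_insert_of_notMem hn]


end

section


variable {Ω : Type*} [MeasurableSpace Ω] {P : Measure Ω} [IsProbabilityMeasure P]



noncomputable def extFn (I : Finset ℕ) (v : I → ℝ) (i : ℕ) : ℝ :=
  if h : i ∈ I then v ⟨i, h⟩ else 0

lemma measurable_extFn (I : Finset ℕ) (i : ℕ) : Measurable (fun v : (I → ℝ) => extFn I v i) := by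
  unfold extFn
  by_cases h : i ∈ I
  · simp only [dif_pos h]; exact measurable_pi_apply _
  · simp only [dif_neg h]; exact measurable_const

lemma extFn_spec (I : Finset ℕ) (x : ℕ → ℝ) {i : ℕ} (hi : i ∈ I) :
    extFn I (fun j : I => x j) i = x i := dif_pos hi

lemma sum_extFn (I J : Finset ℕ) (hJI : J ⊆ I) (x : ℕ → ℝ) :
    ∑ i ∈ J, extFn I (fun i : I => x i) i = ∑ i ∈ J, x i :=
  Finset.sum_congr rfl fun i hi => extFn_spec I x (hJI hi)

lemma indep_triple_last (X : ℕ → Ω → ℝ) (hmeas : ∀ i, Measurable (X i))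
    (hindep : iIndepFun X P) (j m : ℕ) :
    IndepFun (fun ω => (∑ i ∈ Finset.range j, X i ω,
        X j ω, ∑ i ∈ Finset.Ico (j+1) (j+m+1), X i ω)) (X (j+m+1)) P := by
  have hdisj : Disjoint (Finset.range (j+m+1)) {j+m+1} := by
    simp [Finset.disjoint_singleton_right]
  set I := Finset.range (j+m+1) with hI
  have h := indep_comp X hmeas hindep I {j+m+1} hdisj
    (fun v => (∑ i ∈ Finset.range j, extFn I v i, extFn I v j,
        ∑ i ∈ Finset.Ico (j+1) (j+m+1), extFn I v i))
    (fun v => v ⟨j+m+1, Finset.mem_singleton_self _⟩)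
    (((Finset.measurable_sum _ fun i _ => measurable_extFn I i).prodMk
      ((measurable_extFn I j).prodMk
        (Finset.measurable_sum _ fun i _ => measurable_extFn I i))))
    (measurable_pi_apply _)
  have e1 : (fun ω => (∑ i ∈ Finset.range j, extFn I (fun i : I => X i ω) i,
      extFn I (fun i : I => X i ω) j,
      ∑ i ∈ Finset.Ico (j+1) (j+m+1), extFn I (fun i : I => X i ω) i))
      = fun ω => (∑ i ∈ Finset.range j, X i ω, X j ω,
        ∑ i ∈ Finset.Ico (j+1) (j+m+1), X i ω) := by
    funext ω
    have h1 := sum_extFn I (Finset.range j) (by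
      rw [hI]; exact Finset.range_subset_range.mpr (by omega)) (fun n => X n ω)
    have h2 := extFn_spec I (fun n => X n ω) (show j ∈ I by
      rw [hI]; exact Finset.mem_range.mpr (by omega))
    have h3 := sum_extFn I (Finset.Ico (j+1) (j+m+1)) (by
      rw [hI]; intro a ha; have := (Finset.mem_Ico.mp ha); exact Finset.mem_range.mpr (by omega))
      (fun n => X n ω)
    rw [h1, h2, h3]
  rw [e1] at h
  exact h

lemma indep_pair_mid (X : ℕ → Ω → ℝ) (hmeas : ∀ i, Measurable (X i))
    (hindep : iIndepFun X P) (j m : ℕ) :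
    IndepFun (fun ω => (∑ i ∈ Finset.range j, X i ω, X j ω))
      (fun ω => ∑ i ∈ Finset.Ico (j+1) (j+m+1), X i ω) P := by
  have hdisj : Disjoint (Finset.range (j+1)) (Finset.Ico (j+1) (j+m+1)) := by
    rw [Finset.disjoint_left]
    intro a ha hb
    have := Finset.mem_range.mp ha
    have := (Finset.mem_Ico.mp hb).1
    omega
  set I := Finset.range (j+1) with hI
  have h := indep_comp X hmeas hindep I (Finset.Ico (j+1) (j+m+1)) hdisj
    (fun v => (∑ i ∈ Finset.range j, extFn I v i, extFn I v j))
    (fun v => ∑ i : Finset.Ico (j+1) (j+m+1), v i)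
    ((Finset.measurable_sum _ fun i _ => measurable_extFn I i).prodMk (measurable_extFn I j))
    (Finset.measurable_sum _ fun i _ => measurable_pi_apply _)
  have e1 : (fun ω => (∑ i ∈ Finset.range j, extFn I (fun i : I => X i ω) i,
      extFn I (fun i : I => X i ω) j))
      = fun ω => (∑ i ∈ Finset.range j, X i ω, X j ω) := by
    funext ω
    have h1 := sum_extFn I (Finset.range j) (by
      rw [hI]; exact Finset.range_subset_range.mpr (by omega)) (fun n => X n ω)
    have h2 := extFn_spec I (fun n => X n ω) (show j ∈ I by
      rw [hI]; exact Finset.mem_range.mpr (by omega))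
    rw [h1, h2]
  have e2 : (fun ω => ∑ i : Finset.Ico (j+1) (j+m+1), X (↑i) ω)
      = fun ω => ∑ i ∈ Finset.Ico (j+1) (j+m+1), X i ω := by
    funext ω
    exact Finset.sum_coe_sort (Finset.Ico (j+1) (j+m+1)) (fun n => X n ω)
  rw [e1, e2] at h
  exact h

lemma sum_split (X : ℕ → Ω → ℝ) (j m : ℕ) (ω : Ω) :
    ∑ i ∈ Finset.range (j+m+1), X i ω
      = (∑ i ∈ Finset.range (j+1), X i ω) + ∑ i ∈ Finset.Ico (j+1) (j+m+1), X i ω := by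
  rw [Finset.range_eq_Ico, Finset.range_eq_Ico]
  exact (Finset.sum_Ico_consecutive _ (by omega) (by omega)).symm


end

section


variable {Ω : Type*} [MeasurableSpace Ω] {P : Measure Ω} [IsProbabilityMeasure P]

variable {r : ℝ} (X : ℕ → Ω → ℝ)

lemma sum_measurable' (hmeas : ∀ i, Measurable (X i)) (I : Finset ℕ) :
    Measurable (fun ω => ∑ i ∈ I, X i ω) :=
  Finset.measurable_sum I fun i _ => hmeas i

/-- After all middle peels: the last-stage integral over `S j` of the
indicator-exponential, giving the Poisson(rs) factor. -/
lemma final_stage (hr : 0 < r) (hmeas : ∀ i, Measurable (X i))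
    (hdist : ∀ i, Measure.map (X i) P = expMeasure r)
    (hindep : iIndepFun X P) (j : ℕ) {s : ℝ} (hs : 0 ≤ s) :
    ∫⁻ ω, (if (∑ i ∈ Finset.range j, X i ω) ≤ s then
        ENNReal.ofReal (exp (-(r * (s - ∑ i ∈ Finset.range j, X i ω)))) else 0) ∂P
    = ENNReal.ofReal (exp (-(r * s)) * (r * s) ^ j / j.factorial) := by
  have hS : Measurable (fun ω => ∑ i ∈ Finset.range j, X i ω) := sum_measurable' X hmeas _
  have hFmeas : Measurable fun z : ℝ => (if z ≤ s then ENNReal.ofReal (exp (-(r * (s - z)))) else 0) :=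
    Measurable.ite measurableSet_Iic
      ((by fun_prop : Continuous fun z : ℝ => exp (-(r * (s - z)))).measurable.ennreal_ofReal)
      measurable_const
  rw [← lintegral_map hFmeas hS, L1 X hr hmeas hdist hindep (Finset.range j) s, if_pos hs,
    Finset.card_range]

/-- The `k = 0` term. -/
lemma term_k0 (hr : 0 < r) (hmeas : ∀ i, Measurable (X i))
    (hdist : ∀ i, Measure.map (X i) P = expMeasure r)
    (hindep : iIndepFun X P) (j : ℕ) {s t : ℝ} (hs : 0 ≤ s) (hst : s < t) :
    ∫⁻ ω, (if (∑ i ∈ Finset.range j, X i ω) ≤ s ∧ t < (∑ i ∈ Finset.range (j+1), X i ω)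
        then 1 else 0) ∂P
    = ENNReal.ofReal (exp (-(r * s)) * (r * s) ^ j / j.factorial) *
        ENNReal.ofReal (exp (-(r * (t - s)))) := by
  have hS : Measurable (fun ω => ∑ i ∈ Finset.range j, X i ω) := sum_measurable' X hmeas _
  have hsplit : ∀ ω, ∑ i ∈ Finset.range (j+1), X i ω
      = (∑ i ∈ Finset.range j, X i ω) + X j ω := by
    intro ω; rw [Finset.sum_range_succ]
  simp only [hsplit]
  set f : ℝ → ℝ → ℝ≥0∞ := fun a x => if a ≤ s ∧ t < a + x then 1 else 0 with hf
  have hfm : Measurable (Function.uncurry f) := by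
    rw [hf]
    apply Measurable.ite
    · exact ((measurableSet_le measurable_fst measurable_const).inter
        (measurableSet_lt measurable_const (measurable_fst.add measurable_snd)))
    · exact measurable_const
    · exact measurable_const
  have hInd : IndepFun (fun ω => ∑ i ∈ Finset.range j, X i ω) (X j) P :=
    (indep_single_sum X hmeas hindep (by simp)).symm
  have hpeel := peel' (fun ω => ∑ i ∈ Finset.range j, X i ω) (X j) hS (hmeas j) hInd f hfm
  rw [hf] at hpeel
  rw [hpeel, hdist j]
  have hinner : ∀ a : ℝ, (∫⁻ x, (if a ≤ s ∧ t < a + x then (1:ℝ≥0∞) else 0) ∂(expMeasure r))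
      = if a ≤ s then ENNReal.ofReal (exp (-(r * (t - a)))) else 0 := by
    intro a
    by_cases ha : a ≤ s
    · rw [if_pos ha]
      have hpt : ∀ x : ℝ, (if a ≤ s ∧ t < a + x then (1:ℝ≥0∞) else 0)
          = (Ioi (t - a)).indicator (fun _ => (1:ℝ≥0∞)) x := by
        intro x
        rw [Set.indicator_apply]
        by_cases hx : x ∈ Ioi (t - a)
        · rw [if_pos hx, if_pos ⟨ha, by have := mem_Ioi.mp hx; linarith⟩]
        · rw [if_neg hx, if_neg (fun h => hx (mem_Ioi.mpr (by linarith [h.2])))]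
      rw [funext hpt, lintegral_indicator_const measurableSet_Ioi, one_mul,
        expMeasure_Ioi hr _ (by linarith)]
    · rw [if_neg ha]
      have : ∀ x : ℝ, (if a ≤ s ∧ t < a + x then (1:ℝ≥0∞) else 0) = 0 := by
        intro x; rw [if_neg (fun h => ha h.1)]
      rw [funext this, lintegral_zero]
  simp only [hinner]
  have hcongr : ∀ a : ℝ, (if a ≤ s then ENNReal.ofReal (exp (-(r * (t - a)))) else 0)
      = (if a ≤ s then ENNReal.ofReal (exp (-(r * (s - a)))) else 0) *
          ENNReal.ofReal (exp (-(r * (t - s)))) := by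
    intro a
    by_cases ha : a ≤ s
    · rw [if_pos ha, if_pos ha, ← ENNReal.ofReal_mul (exp_nonneg _), ← Real.exp_add]
      congr 2
      ring
    · rw [if_neg ha, if_neg ha, zero_mul]
  have hstep : ∫⁻ ω, (if (∑ i ∈ Finset.range j, X i ω) ≤ s then
        ENNReal.ofReal (exp (-(r * (t - ∑ i ∈ Finset.range j, X i ω)))) else 0) ∂P
      = ∫⁻ ω, (if (∑ i ∈ Finset.range j, X i ω) ≤ s then
        ENNReal.ofReal (exp (-(r * (s - ∑ i ∈ Finset.range j, X i ω)))) else 0) *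
          ENNReal.ofReal (exp (-(r * (t - s)))) ∂P := lintegral_congr fun ω => hcongr _
  rw [hstep, lintegral_mul_const _ (by
    apply Measurable.ite (hS measurableSet_Iic) _ measurable_const
    exact ((by fun_prop : Continuous fun y : ℝ => exp (-(r * (s - y)))).measurable.ennreal_ofReal).comp hS)]
  rw [final_stage X hr hmeas hdist hindep j hs]


end

section


variable {Ω : Type*} [MeasurableSpace Ω] {P : Measure Ω} [IsProbabilityMeasure P]

variable {r : ℝ} (X : ℕ → Ω → ℝ)

lemma term_k (hr : 0 < r) (hmeas : ∀ i, Measurable (X i))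
    (hdist : ∀ i, Measure.map (X i) P = expMeasure r)
    (hindep : iIndepFun X P) (j m : ℕ) {s t : ℝ}
    (hs : 0 ≤ s) (hst : s < t) :
    ∫⁻ ω, (if (∑ i ∈ Finset.range j, X i ω) ≤ s ∧ s < (∑ i ∈ Finset.range (j+1), X i ω)
        ∧ (∑ i ∈ Finset.range (j+m+1), X i ω) ≤ t ∧ t < (∑ i ∈ Finset.range (j+m+2), X i ω)
        then 1 else 0) ∂P
    = ENNReal.ofReal (exp (-(r * s)) * (r * s) ^ j / j.factorial) *
        ENNReal.ofReal (exp (-(r * (t - s))) * (r * (t - s)) ^ (m+1) / (m+1).factorial) := by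
  have hSj : Measurable (fun ω => ∑ i ∈ Finset.range j, X i ω) :=
    Finset.measurable_sum _ fun i _ => hmeas i
  have hU : Measurable (fun ω => ∑ i ∈ Finset.Ico (j+1) (j+m+1), X i ω) :=
    Finset.measurable_sum _ fun i _ => hmeas i
  set f₁ : ℝ × ℝ × ℝ → ℝ → ℝ≥0∞ := fun w y =>
    if w.1 ≤ s ∧ s < w.1 + w.2.1 ∧ w.1 + w.2.1 + w.2.2 ≤ t ∧ t < w.1 + w.2.1 + w.2.2 + y
    then 1 else 0 with hf₁
  have hm1 : MeasurableSet {p : (ℝ × ℝ × ℝ) × ℝ | p.1.1 ≤ s} :=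
    measurableSet_le (by fun_prop) measurable_const
  have hm2 : MeasurableSet {p : (ℝ × ℝ × ℝ) × ℝ | s < p.1.1 + p.1.2.1} :=
    measurableSet_lt measurable_const (by fun_prop)
  have hm3 : MeasurableSet {p : (ℝ × ℝ × ℝ) × ℝ | p.1.1 + p.1.2.1 + p.1.2.2 ≤ t} :=
    measurableSet_le (by fun_prop) measurable_const
  have hm4 : MeasurableSet {p : (ℝ × ℝ × ℝ) × ℝ | t < p.1.1 + p.1.2.1 + p.1.2.2 + p.2} :=
    measurableSet_lt measurable_const (by fun_prop)
  have hf₁m : Measurable (Function.uncurry f₁) := by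
    rw [hf₁]
    exact Measurable.ite (hm1.inter (hm2.inter (hm3.inter hm4))) measurable_const
      measurable_const
  have hW₁ : Measurable (fun ω => (∑ i ∈ Finset.range j, X i ω, X j ω,
      ∑ i ∈ Finset.Ico (j+1) (j+m+1), X i ω)) := hSj.prodMk ((hmeas j).prodMk hU)
  -- rewrite the event
  have hev : ∀ ω, (if (∑ i ∈ Finset.range j, X i ω) ≤ s ∧ s < (∑ i ∈ Finset.range (j+1), X i ω)
        ∧ (∑ i ∈ Finset.range (j+m+1), X i ω) ≤ t ∧ t < (∑ i ∈ Finset.range (j+m+2), X i ω)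
        then (1:ℝ≥0∞) else 0)
      = f₁ (∑ i ∈ Finset.range j, X i ω, X j ω, ∑ i ∈ Finset.Ico (j+1) (j+m+1), X i ω)
          (X (j+m+1) ω) := by
    intro ω
    simp only [hf₁]
    have e1 : ∑ i ∈ Finset.range (j+1), X i ω = (∑ i ∈ Finset.range j, X i ω) + X j ω :=
      Finset.sum_range_succ _ _
    have e2 : ∑ i ∈ Finset.range (j+m+1), X i ω
        = (∑ i ∈ Finset.range j, X i ω) + X j ω + ∑ i ∈ Finset.Ico (j+1) (j+m+1), X i ω := by
      rw [sum_split X j m ω, e1]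
    have e3 : ∑ i ∈ Finset.range (j+m+2), X i ω
        = (∑ i ∈ Finset.range j, X i ω) + X j ω + (∑ i ∈ Finset.Ico (j+1) (j+m+1), X i ω)
          + X (j+m+1) ω := by
      have : j+m+2 = (j+m+1)+1 := by omega
      rw [this, Finset.sum_range_succ, e2]
    rw [e1, e2, e3]
  rw [lintegral_congr hev,
    peel' _ (X (j+m+1)) hW₁ (hmeas _) (indep_triple_last X hmeas hindep j m) f₁ hf₁m,
    hdist (j+m+1)]
  -- inner integral over the last coordinate
  have hinner1 : ∀ w : ℝ × ℝ × ℝ, ∫⁻ y, f₁ w y ∂(expMeasure r)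
      = if w.1 ≤ s ∧ s < w.1 + w.2.1 ∧ w.1 + w.2.1 + w.2.2 ≤ t
        then ENNReal.ofReal (exp (-(r * (t - (w.1 + w.2.1 + w.2.2))))) else 0 := by
    intro w
    by_cases hc : w.1 ≤ s ∧ s < w.1 + w.2.1 ∧ w.1 + w.2.1 + w.2.2 ≤ t
    · rw [if_pos hc]
      have hpt : ∀ y : ℝ, f₁ w y
          = (Ioi (t - (w.1 + w.2.1 + w.2.2))).indicator (fun _ => (1:ℝ≥0∞)) y := by
        intro y
        simp only [hf₁, Set.indicator_apply]
        by_cases hy : y ∈ Ioi (t - (w.1 + w.2.1 + w.2.2))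
        · rw [if_pos hy, if_pos ⟨hc.1, hc.2.1, hc.2.2, by have := mem_Ioi.mp hy; linarith⟩]
        · rw [if_neg hy, if_neg (fun h => hy (mem_Ioi.mpr (by linarith [h.2.2.2])))]
      rw [funext hpt, lintegral_indicator_const measurableSet_Ioi, one_mul,
        expMeasure_Ioi hr _ (by have := hc.2.2; have := hc.2.1; have := hc.1; linarith)]
    · rw [if_neg hc]
      have hpt : ∀ y : ℝ, f₁ w y = 0 := by
        intro y
        simp only [hf₁]
        rw [if_neg (fun h => hc ⟨h.1, h.2.1, h.2.2.1⟩)]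
      rw [funext hpt, lintegral_zero]
  rw [lintegral_congr (fun ω => hinner1 _)]
  -- second peel: over the middle block
  set f₂ : ℝ × ℝ → ℝ → ℝ≥0∞ := fun w u =>
    if w.1 ≤ s ∧ s < w.1 + w.2 ∧ w.1 + w.2 + u ≤ t
    then ENNReal.ofReal (exp (-(r * (t - (w.1 + w.2 + u))))) else 0 with hf₂
  have hn1 : MeasurableSet {p : (ℝ × ℝ) × ℝ | p.1.1 ≤ s} :=
    measurableSet_le (by fun_prop) measurable_const
  have hn2 : MeasurableSet {p : (ℝ × ℝ) × ℝ | s < p.1.1 + p.1.2} :=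
    measurableSet_lt measurable_const (by fun_prop)
  have hn3 : MeasurableSet {p : (ℝ × ℝ) × ℝ | p.1.1 + p.1.2 + p.2 ≤ t} :=
    measurableSet_le (by fun_prop) measurable_const
  have hf₂m : Measurable (Function.uncurry f₂) := by
    rw [hf₂]
    exact Measurable.ite (hn1.inter (hn2.inter hn3))
      (((by fun_prop : Continuous fun p : (ℝ × ℝ) × ℝ =>
        exp (-(r * (t - (p.1.1 + p.1.2 + p.2))))).measurable).ennreal_ofReal)
      measurable_const
  have hW₂ : Measurable (fun ω => (∑ i ∈ Finset.range j, X i ω, X j ω)) :=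
    hSj.prodMk (hmeas j)
  have hstep2 : ∫⁻ ω, (if (∑ i ∈ Finset.range j, X i ω) ≤ s
        ∧ s < (∑ i ∈ Finset.range j, X i ω) + X j ω
        ∧ (∑ i ∈ Finset.range j, X i ω) + X j ω + (∑ i ∈ Finset.Ico (j+1) (j+m+1), X i ω) ≤ t
      then ENNReal.ofReal (exp (-(r * (t - ((∑ i ∈ Finset.range j, X i ω) + X j ω
        + (∑ i ∈ Finset.Ico (j+1) (j+m+1), X i ω)))))) else 0) ∂P
      = ∫⁻ ω, ∫⁻ z, f₂ (∑ i ∈ Finset.range j, X i ω, X j ω) z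
          ∂(Measure.map (fun ω => ∑ i ∈ Finset.Ico (j+1) (j+m+1), X i ω) P) ∂P :=
    peel' _ _ hW₂ hU (indep_pair_mid X hmeas hindep j m) f₂ hf₂m
  rw [hstep2]
  -- inner integral over the middle block via L1
  have hmcard : (Finset.Ico (j+1) (j+m+1)).card = m := by
    rw [Nat.card_Ico]; omega
  have hinner2 : ∀ w : ℝ × ℝ, ∫⁻ u, f₂ w u
        ∂(Measure.map (fun ω => ∑ i ∈ Finset.Ico (j+1) (j+m+1), X i ω) P)
      = if w.1 ≤ s ∧ s < w.1 + w.2 ∧ 0 ≤ t - (w.1 + w.2)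
        then ENNReal.ofReal (exp (-(r * (t - (w.1 + w.2))))
          * (r * (t - (w.1 + w.2))) ^ m / m.factorial) else 0 := by
    intro w
    by_cases hc : w.1 ≤ s ∧ s < w.1 + w.2
    · have hpt : ∀ u : ℝ, f₂ w u = if u ≤ t - (w.1 + w.2)
          then ENNReal.ofReal (exp (-(r * ((t - (w.1 + w.2)) - u)))) else 0 := by
        intro u
        simp only [hf₂]
        have hval : t - (w.1 + w.2 + u) = t - (w.1 + w.2) - u := by ring
        rw [hval]
        exact if_congr ⟨fun h => by linarith [h.2.2], fun h => ⟨hc.1, hc.2, by linarith⟩⟩ rfl rfl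
      rw [lintegral_congr hpt, L1 X hr hmeas hdist hindep _ _, hmcard]
      by_cases hd : 0 ≤ t - (w.1 + w.2)
      · rw [if_pos hd, if_pos ⟨hc.1, hc.2, hd⟩]
      · rw [if_neg hd, if_neg (fun h => hd h.2.2)]
    · have hpt : ∀ u : ℝ, f₂ w u = 0 := by
        intro u
        simp only [hf₂]
        rw [if_neg (fun h => hc ⟨h.1, h.2.1⟩)]
      rw [lintegral_congr hpt, lintegral_zero,
        if_neg (fun h => hc ⟨h.1, h.2.1⟩)]
  rw [lintegral_congr (fun ω => hinner2 _)]
  -- third peel: over X j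
  set f₃ : ℝ → ℝ → ℝ≥0∞ := fun a x =>
    if a ≤ s ∧ s < a + x ∧ 0 ≤ t - (a + x)
    then ENNReal.ofReal (exp (-(r * (t - (a + x)))) * (r * (t - (a + x))) ^ m / m.factorial)
    else 0 with hf₃
  have hq1 : MeasurableSet {p : ℝ × ℝ | p.1 ≤ s} :=
    measurableSet_le (by fun_prop) measurable_const
  have hq2 : MeasurableSet {p : ℝ × ℝ | s < p.1 + p.2} :=
    measurableSet_lt measurable_const (by fun_prop)
  have hq3 : MeasurableSet {p : ℝ × ℝ | 0 ≤ t - (p.1 + p.2)} :=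
    measurableSet_le measurable_const (by fun_prop)
  have hf₃m : Measurable (Function.uncurry f₃) := by
    rw [hf₃]
    exact Measurable.ite (hq1.inter (hq2.inter hq3))
      (((by fun_prop : Continuous fun p : ℝ × ℝ =>
        exp (-(r * (t - (p.1 + p.2)))) * (r * (t - (p.1 + p.2))) ^ m / m.factorial).measurable).ennreal_ofReal)
      measurable_const
  have hIndSX : IndepFun (fun ω => ∑ i ∈ Finset.range j, X i ω) (X j) P :=
    (indep_single_sum X hmeas hindep (by simp)).symm
  have hstep3 : ∫⁻ ω, f₃ (∑ i ∈ Finset.range j, X i ω) (X j ω) ∂P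
      = ∫⁻ ω, ∫⁻ z, f₃ (∑ i ∈ Finset.range j, X i ω) z ∂(Measure.map (X j) P) ∂P :=
    peel' _ _ hSj (hmeas j) hIndSX f₃ hf₃m
  rw [hstep3, hdist j]
  have hinner3 : ∀ a : ℝ, ∫⁻ x, f₃ a x ∂(expMeasure r)
      = if a ≤ s then ENNReal.ofReal (exp (-(r * (t - a)))
          * (r * (t - s)) ^ (m+1) / (m+1).factorial) else 0 := by
    intro a
    by_cases ha : a ≤ s
    · have hpt : ∀ x : ℝ, f₃ a x = if s - a < x ∧ x ≤ t - a
          then ENNReal.ofReal (exp (-(r * (t - a - x))) * (r * (t - a - x)) ^ m / m.factorial)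
          else 0 := by
        intro x
        simp only [hf₃]
        have hval : t - (a + x) = t - a - x := by ring
        rw [hval]
        exact if_congr ⟨fun h => ⟨by linarith [h.2.1], by linarith [h.2.2]⟩,
          fun h => ⟨ha, by linarith [h.1], by linarith [h.2]⟩⟩ rfl rfl
      rw [lintegral_congr hpt, key_integral₂ hr m ha hst, if_pos ha]
    · have hpt : ∀ x : ℝ, f₃ a x = 0 := by
        intro x
        simp only [hf₃]
        rw [if_neg (fun h => ha h.1)]
      rw [lintegral_congr hpt, lintegral_zero, if_neg ha]
  rw [lintegral_congr (fun ω => hinner3 _)]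
  -- final: split the exponential and integrate over S j
  have hcongr : ∀ a : ℝ, (if a ≤ s then ENNReal.ofReal (exp (-(r * (t - a)))
        * (r * (t - s)) ^ (m+1) / (m+1).factorial) else 0)
      = (if a ≤ s then ENNReal.ofReal (exp (-(r * (s - a)))) else 0) *
          ENNReal.ofReal (exp (-(r * (t - s))) * (r * (t - s)) ^ (m+1) / (m+1).factorial) := by
    intro a
    by_cases ha : a ≤ s
    · rw [if_pos ha, if_pos ha, ← ENNReal.ofReal_mul (exp_nonneg _)]
      congr 1
      rw [← mul_div_assoc, ← mul_assoc, ← Real.exp_add]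
      congr 2
      ring
    · rw [if_neg ha, if_neg ha, zero_mul]
  rw [lintegral_congr (fun ω => hcongr _), lintegral_mul_const _ (by
    apply Measurable.ite (hSj measurableSet_Iic) _ measurable_const
    exact ((by fun_prop : Continuous fun y : ℝ => exp (-(r * (s - y)))).measurable.ennreal_ofReal).comp hSj),
    final_stage X hr hmeas hdist hindep j hs]


end

section


variable {Ω : Type*} [MeasurableSpace Ω] {P : Measure Ω} [IsProbabilityMeasure P] {r : ℝ}

variable (X : ℕ → Ω → ℝ)

/-- a.e. all interarrival times are nonnegative -/
lemma ae_nonneg (hmeas : ∀ i, Measurable (X i))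
    (hdist : ∀ i, Measure.map (X i) P = expMeasure r) :
    ∀ᵐ ω ∂P, ∀ i, 0 ≤ X i ω := by
  rw [ae_all_iff]
  intro i
  rw [ae_iff]
  have h1 : {ω | ¬ 0 ≤ X i ω} = X i ⁻¹' (Iio 0) := by
    ext ω; simp only [mem_setOf_eq, not_le, mem_preimage, mem_Iio]
  rw [h1, ← Measure.map_apply (hmeas i) measurableSet_Iio, hdist i, expMeasure_Iio_zero]

/-- a.e. the sums eventually exceed `t` -/
lemma ae_unbounded (hr : 0 < r) (hmeas : ∀ i, Measurable (X i))
    (hdist : ∀ i, Measure.map (X i) P = expMeasure r)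
    (hindep : iIndepFun X P) (t : ℝ) :
    P ({ω | ∀ i, 0 ≤ X i ω} ∩ {ω | ∀ m, (∑ i ∈ Finset.range m, X i ω) ≤ t}) = 0 := by
  set c : ℝ≥0∞ := expMeasure r (Iic t) with hc
  have hc1 : c < 1 := expMeasure_Iic_lt_one hr t
  have hbound : ∀ m : ℕ,
      P ({ω | ∀ i, 0 ≤ X i ω} ∩ {ω | ∀ m, (∑ i ∈ Finset.range m, X i ω) ≤ t}) ≤ c ^ m := by
    intro m
    have hsub : {ω | ∀ i, 0 ≤ X i ω} ∩ {ω | ∀ m, (∑ i ∈ Finset.range m, X i ω) ≤ t}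
        ⊆ ⋂ i ∈ Finset.range m, X i ⁻¹' (Iic t) := by
      intro ω hω
      simp only [Finset.mem_range, mem_iInter, mem_preimage, mem_Iic]
      intro i hi
      have h1 : X i ω ≤ ∑ l ∈ Finset.range (i+1), X l ω := by
        rw [Finset.sum_range_succ]
        have : 0 ≤ ∑ l ∈ Finset.range i, X l ω :=
          Finset.sum_nonneg fun l _ => hω.1 l
        linarith
      exact le_trans h1 (hω.2 (i+1))
    have hprod : P (⋂ i ∈ Finset.range m, X i ⁻¹' (Iic t)) = c ^ m := by
      rw [hindep.measure_inter_preimage_eq_mul (Finset.range m)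
        (sets := fun _ => Iic t) (fun i _ => measurableSet_Iic)]
      have : ∀ i ∈ Finset.range m, P (X i ⁻¹' Iic t) = c := by
        intro i _
        rw [← Measure.map_apply (hmeas i) measurableSet_Iic, hdist i, hc]
      rw [Finset.prod_congr rfl this, Finset.prod_const, Finset.card_range]
    calc P _ ≤ P (⋂ i ∈ Finset.range m, X i ⁻¹' (Iic t)) := measure_mono hsub
      _ = c ^ m := hprod
  have htend : Filter.Tendsto (fun m : ℕ => c ^ m) Filter.atTop (nhds 0) :=
    ENNReal.tendsto_pow_atTop_nhds_zero_of_lt_one hc1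
  have := ge_of_tendsto htend (Filter.Eventually.of_forall hbound)
  simpa using this


end

section


lemma sum_mono (x : ℕ → ℝ) (hnn : ∀ i, 0 ≤ x i) : Monotone (fun m => ∑ i ∈ Finset.range m, x i) :=
  fun a b hab => Finset.sum_le_sum_of_subset_of_nonneg
    (Finset.range_subset_range.mpr hab) (fun i _ _ => hnn i)

lemma sSup_char (x : ℕ → ℝ) (hnn : ∀ i, 0 ≤ x i) {t : ℝ} (M : ℕ)
    (hM : ∀ m, (∑ i ∈ Finset.range m, x i) ≤ t → m ≤ M) {u : ℝ} (hu : 0 ≤ u) (hut : u ≤ t)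
    (j : ℕ) :
    sSup {k : ℕ | (∑ i ∈ Finset.range k, x i) ≤ u} = j
      ↔ ((∑ i ∈ Finset.range j, x i) ≤ u ∧ u < ∑ i ∈ Finset.range (j+1), x i) := by
  set K : Set ℕ := {k | (∑ i ∈ Finset.range k, x i) ≤ u} with hK
  have hmono := sum_mono x hnn
  have hbdd : BddAbove K := ⟨M, fun k hk => hM k (le_trans hk hut)⟩
  have h0 : 0 ∈ K := by simp [hK]; exact hu
  have hmem : sSup K ∈ K := Nat.sSup_mem ⟨0, h0⟩ hbdd
  constructor
  · intro h
    refine ⟨by rw [← h]; exact hmem, ?_⟩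
    by_contra hh
    push_neg at hh
    have : j + 1 ∈ K := hh
    have := le_csSup hbdd this
    omega
  · rintro ⟨h1, h2⟩
    have hj : j ≤ sSup K := le_csSup hbdd h1
    have hj' : sSup K ≤ j := by
      by_contra hh
      push_neg at hh
      have hle : j + 1 ≤ sSup K := hh
      have := hmono hle
      simp only at this
      have : ∑ i ∈ Finset.range (j+1), x i ≤ u := le_trans this hmem
      linarith
    omega

lemma sum_poisson {r s : ℝ} (hrs : 0 ≤ r * s) :
    ∑' j : ℕ, ENNReal.ofReal (Real.exp (-(r*s)) * (r*s) ^ j / (Nat.factorial j)) = 1 := by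
  have hsummable : Summable (fun j : ℕ => Real.exp (-(r*s)) * (r*s) ^ j / (Nat.factorial j)) := by
    have := (Real.summable_pow_div_factorial (r*s)).mul_left (Real.exp (-(r*s)))
    convert this using 2 with j
    · rfl
    ring
  rw [← ENNReal.ofReal_tsum_of_nonneg (fun j => by positivity) hsummable]
  have h1 : ∀ j : ℕ, Real.exp (-(r*s)) * (r*s) ^ j / (Nat.factorial j)
      = Real.exp (-(r*s)) * ((r*s) ^ j / (Nat.factorial j)) := fun j => by ring
  rw [funext h1, tsum_mul_left]
  have h2 : ∑' j : ℕ, (r*s) ^ j / (Nat.factorial j : ℝ) = Real.exp (r*s) := by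
    rw [Real.exp_eq_exp_ℝ, NormedSpace.exp_eq_tsum_div]
  rw [h2, ← Real.exp_add]
  simp


end

end PoissonAux

open PoissonAux




/-- Increments of the counting process built from i.i.d. exponential
interarrival times of mean `λ` are Poisson distributed: with `A_j = X_1 + ⋯ + X_j`
and `N(t) = max{k : A_k ≤ t}`, for `0 ≤ s < t` the increment `N(t) - N(s)` has
`P(N(t) - N(s) = k) = ((t-s)/λ)^k / k! · exp(-(t-s)/λ)`. -/
theorem poisson_increments {Ω : Type*} [MeasurableSpace Ω]
    (P : Measure Ω) [IsProbabilityMeasure P] (lam : ℝ) (hlam : 0 < lam)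
    (X : ℕ → Ω → ℝ) (hmeas : ∀ i, Measurable (X i))
    (hdist : ∀ i, Measure.map (X i) P = expMeasure (1 / lam))
    (hindep : iIndepFun X P)
    (A : ℕ → Ω → ℝ) (hA : ∀ j ω, A j ω = ∑ i ∈ Finset.range j, X i ω)
    (N : ℝ → Ω → ℕ) (hN : ∀ t ω, N t ω = sSup {k : ℕ | A k ω ≤ t})
    (s t : ℝ) (hs : 0 ≤ s) (hst : s < t) (k : ℕ) :
    P {ω | N t ω - N s ω = k} =
      ENNReal.ofReal
        (((t - s) / lam) ^ k / (Nat.factorial k) * Real.exp (-(t - s) / lam)) := by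
  have hr : (0:ℝ) < 1 / lam := by positivity
  set r : ℝ := 1 / lam with hrdef
  have ht0 : (0:ℝ) ≤ t := le_of_lt (lt_of_le_of_lt hs hst)
  -- the good set
  set good : Set Ω := {ω | (∀ i, 0 ≤ X i ω) ∧
      ∃ M, ∀ m, (∑ i ∈ Finset.range m, X i ω) ≤ t → m ≤ M} with hgood
  have hSmeas : ∀ m : ℕ, Measurable (fun ω => ∑ i ∈ Finset.range m, X i ω) :=
    fun m => Finset.measurable_sum _ fun i _ => hmeas i
  have hgoodmeas : MeasurableSet good := by
    rw [hgood]
    have e1 : {ω : Ω | (∀ i, 0 ≤ X i ω) ∧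
        ∃ M, ∀ m, (∑ i ∈ Finset.range m, X i ω) ≤ t → m ≤ M}
        = (⋂ i, {ω | 0 ≤ X i ω}) ∩ (⋃ M : ℕ, ⋂ m : ℕ,
            {ω : Ω | (∑ i ∈ Finset.range m, X i ω) ≤ t → m ≤ M}) := by
      ext ω
      simp only [mem_setOf_eq, mem_inter_iff, mem_iInter, mem_iUnion]
    rw [e1]
    refine MeasurableSet.inter (MeasurableSet.iInter fun i =>
      measurableSet_le measurable_const (hmeas i)) ?_
    refine MeasurableSet.iUnion fun M => MeasurableSet.iInter fun m => ?_
    by_cases hmM : m ≤ M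
    · have : {ω : Ω | (∑ i ∈ Finset.range m, X i ω) ≤ t → m ≤ M} = univ := by
        ext ω; simp [hmM]
      rw [this]; exact MeasurableSet.univ
    · have : {ω : Ω | (∑ i ∈ Finset.range m, X i ω) ≤ t → m ≤ M}
          = {ω : Ω | t < ∑ i ∈ Finset.range m, X i ω} := by
        ext ω; simp only [mem_setOf_eq]
        constructor
        · intro h; by_contra hh; push_neg at hh; exact hmM (h hh)
        · intro h hh; linarith
      rw [this]; exact measurableSet_lt measurable_const (hSmeas m)
  have hgoodnull : P goodᶜ = 0 := by
    have hsub : goodᶜ ⊆ {ω | ¬ ∀ i, 0 ≤ X i ω} ∪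
        ({ω | ∀ i, 0 ≤ X i ω} ∩ {ω | ∀ m, (∑ i ∈ Finset.range m, X i ω) ≤ t}) := by
      intro ω hω
      rw [hgood] at hω
      simp only [mem_compl_iff, mem_setOf_eq, not_and] at hω
      by_cases hnn : ∀ i, 0 ≤ X i ω
      · right
        refine ⟨hnn, fun m => ?_⟩
        have h2 := hω hnn
        push_neg at h2
        obtain ⟨m', hm1', hm2'⟩ := h2 m
        exact le_trans (sum_mono (fun i => X i ω) hnn (le_of_lt hm2')) hm1'
      · left; exact hnn
    have h1 : P {ω | ¬ ∀ i, 0 ≤ X i ω} = 0 := by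
      have := ae_nonneg X hmeas hdist
      rwa [ae_iff] at this
    have h2 := ae_unbounded X hr hmeas hdist hindep t
    refine le_antisymm ?_ zero_le
    calc P goodᶜ ≤ P ({ω | ¬ ∀ i, 0 ≤ X i ω}) +
        P ({ω | ∀ i, 0 ≤ X i ω} ∩ {ω | ∀ m, (∑ i ∈ Finset.range m, X i ω) ≤ t}) :=
          le_trans (measure_mono hsub) (measure_union_le _ _)
      _ = 0 := by rw [h1, h2, add_zero]
  -- intersecting with good preserves measure
  have hconull : ∀ B : Set Ω, P B = P (B ∩ good) := by
    intro B
    refine le_antisymm ?_ (measure_mono inter_subset_left)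
    calc P B ≤ P ((B ∩ good) ∪ goodᶜ) := measure_mono (fun ω hω => by
          by_cases h : ω ∈ good
          · exact Or.inl ⟨hω, h⟩
          · exact Or.inr h)
      _ ≤ P (B ∩ good) + P goodᶜ := measure_union_le _ _
      _ = P (B ∩ good) := by rw [hgoodnull, add_zero]
  -- characterization of N on good
  have hchar : ∀ ω ∈ good, ∀ u : ℝ, 0 ≤ u → u ≤ t → ∀ j : ℕ,
      (N u ω = j ↔ ((∑ i ∈ Finset.range j, X i ω) ≤ u
        ∧ u < ∑ i ∈ Finset.range (j+1), X i ω)) := by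
    intro ω hg u hu hut j
    obtain ⟨hnn, M, hM⟩ := hg
    have he : {k : ℕ | A k ω ≤ u} = {k : ℕ | (∑ i ∈ Finset.range k, X i ω) ≤ u} := by
      ext m; simp only [mem_setOf_eq, hA]
    rw [hN u ω, he]
    exact sSup_char (fun i => X i ω) hnn M hM hu hut j
  -- the decomposition events
  set D : ℕ → Set Ω := fun j => {ω | (∑ i ∈ Finset.range j, X i ω) ≤ s
      ∧ s < (∑ i ∈ Finset.range (j+1), X i ω)
      ∧ (∑ i ∈ Finset.range (j+k), X i ω) ≤ t
      ∧ t < (∑ i ∈ Finset.range (j+k+1), X i ω)} with hD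
  have hDmeas : ∀ j, MeasurableSet (D j) := by
    intro j
    rw [hD]
    exact (((measurableSet_le (hSmeas j) measurable_const)).inter
      (((measurableSet_lt measurable_const (hSmeas (j+1)))).inter
        (((measurableSet_le (hSmeas (j+k)) measurable_const)).inter
          ((measurableSet_lt measurable_const (hSmeas (j+k+1)))))))
  -- membership in D j on good ↔ N s = j ∧ N t = j + k
  have hDiff : ∀ ω ∈ good, ∀ j, (ω ∈ D j ↔ (N s ω = j ∧ N t ω = j + k)) := by
    intro ω hg j
    rw [hD]
    simp only [mem_setOf_eq]
    constructor
    · rintro ⟨h1, h2, h3, h4⟩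
      exact ⟨(hchar ω hg s hs (le_of_lt hst) j).mpr ⟨h1, h2⟩,
        (hchar ω hg t ht0 le_rfl (j+k)).mpr ⟨h3, h4⟩⟩
    · rintro ⟨h1, h2⟩
      obtain ⟨a1, a2⟩ := (hchar ω hg s hs (le_of_lt hst) j).mp h1
      obtain ⟨b1, b2⟩ := (hchar ω hg t ht0 le_rfl (j+k)).mp h2
      exact ⟨a1, a2, b1, b2⟩
  -- main set identity
  have hmain : {ω | N t ω - N s ω = k} ∩ good = (⋃ j, D j) ∩ good := by
    ext ω
    simp only [mem_inter_iff, mem_setOf_eq, mem_iUnion]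
    constructor
    · rintro ⟨hk, hg⟩
      refine ⟨⟨N s ω, ?_⟩, hg⟩
      have hns := (hchar ω hg s hs (le_of_lt hst) (N s ω)).mp rfl
      have hnt := (hchar ω hg t ht0 le_rfl (N t ω)).mp rfl
      have hle : N s ω ≤ N t ω := by
        by_contra hh
        push_neg at hh
        have h5 : N t ω + 1 ≤ N s ω := hh
        have := sum_mono (fun i => X i ω) hg.1 h5
        simp only at this
        have hA1 : t < ∑ i ∈ Finset.range (N t ω + 1), X i ω := hnt.2
        have hA2 : (∑ i ∈ Finset.range (N s ω), X i ω) ≤ s := hns.1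
        linarith
      have heq : N t ω = N s ω + k := by omega
      exact (hDiff ω hg (N s ω)).mpr ⟨rfl, heq⟩
    · rintro ⟨⟨j, hj⟩, hg⟩
      obtain ⟨h1, h2⟩ := (hDiff ω hg j).mp hj
      rw [h1, h2]
      exact ⟨by omega, hg⟩
  -- disjointness
  have hdisj : Pairwise (Function.onFun Disjoint (fun j => D j ∩ good)) := by
    intro j j' hne
    rw [Function.onFun, Set.disjoint_left]
    rintro ω ⟨hDj, hg⟩ ⟨hDj', _⟩
    have h1 := ((hDiff ω hg j).mp hDj).1
    have h2 := ((hDiff ω hg j').mp hDj').1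
    exact hne (by omega)
  -- compute
  have hterm : ∀ j : ℕ, P (D j)
      = ENNReal.ofReal (exp (-(r * s)) * (r * s) ^ j / j.factorial) *
          ENNReal.ofReal (exp (-(r * (t - s))) * (r * (t - s)) ^ k / k.factorial) := by
    intro j
    have hlint : P (D j) = ∫⁻ ω, (if ω ∈ D j then (1:ℝ≥0∞) else 0) ∂P := by
      rw [← lintegral_indicator_one (hDmeas j)]
      apply lintegral_congr
      intro ω
      rw [Set.indicator_apply]
      rfl
    cases k with
    | zero =>
      have hDeq : D j = {ω | (∑ i ∈ Finset.range j, X i ω) ≤ s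
          ∧ t < (∑ i ∈ Finset.range (j+1), X i ω)} := by
        rw [hD]
        ext ω
        simp only [mem_setOf_eq, Nat.add_zero]
        constructor
        · rintro ⟨h1, h2, h3, h4⟩; exact ⟨h1, h4⟩
        · rintro ⟨h1, h4⟩; exact ⟨h1, lt_trans hst h4, le_trans h1 (le_of_lt hst), h4⟩
      rw [hlint]
      have : ∀ ω, (if ω ∈ D j then (1:ℝ≥0∞) else 0)
          = (if (∑ i ∈ Finset.range j, X i ω) ≤ s ∧ t < (∑ i ∈ Finset.range (j+1), X i ω)
              then 1 else 0) := by
        intro ω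
        refine if_congr ?_ rfl rfl
        rw [hDeq]; rfl
      rw [lintegral_congr this, term_k0 X hr hmeas hdist hindep j hs hst]
      simp [Nat.factorial_zero]
    | succ m =>
      rw [hlint]
      have : ∀ ω, (if ω ∈ D j then (1:ℝ≥0∞) else 0)
          = (if (∑ i ∈ Finset.range j, X i ω) ≤ s ∧ s < (∑ i ∈ Finset.range (j+1), X i ω)
              ∧ (∑ i ∈ Finset.range (j+m+1), X i ω) ≤ t
              ∧ t < (∑ i ∈ Finset.range (j+m+2), X i ω) then 1 else 0) := by
        intro ω
        refine if_congr ?_ rfl rfl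
        rw [hD]
        exact Iff.rfl
      rw [lintegral_congr this, term_k X hr hmeas hdist hindep j m hs hst]
  calc P {ω | N t ω - N s ω = k}
      = P ({ω | N t ω - N s ω = k} ∩ good) := hconull _
    _ = P ((⋃ j, D j) ∩ good) := by rw [hmain]
    _ = P (⋃ j, (D j ∩ good)) := by rw [iUnion_inter]
    _ = ∑' j, P (D j ∩ good) := measure_iUnion hdisj (fun j => (hDmeas j).inter hgoodmeas)
    _ = ∑' j, P (D j) := by
        refine tsum_congr fun j => ?_
        exact (hconull (D j)).symm
    _ = ∑' j, (ENNReal.ofReal (exp (-(r * s)) * (r * s) ^ j / j.factorial) *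
          ENNReal.ofReal (exp (-(r * (t - s))) * (r * (t - s)) ^ k / k.factorial)) :=
        tsum_congr fun j => hterm j
    _ = (∑' j, ENNReal.ofReal (exp (-(r * s)) * (r * s) ^ j / j.factorial)) *
          ENNReal.ofReal (exp (-(r * (t - s))) * (r * (t - s)) ^ k / k.factorial) :=
        ENNReal.tsum_mul_right
    _ = ENNReal.ofReal (exp (-(r * (t - s))) * (r * (t - s)) ^ k / k.factorial) := by
        rw [sum_poisson (by positivity), one_mul]
    _ = ENNReal.ofReal (((t - s) / lam) ^ k / (Nat.factorial k) * Real.exp (-(t - s) / lam)) := by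
        congr 1
        have e1 : r * (t - s) = (t - s) / lam := by rw [hrdef]; ring
        rw [e1, show -((t - s) / lam) = -(t-s)/lam by ring]
        ring
end
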